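/- Let ω = e^{2πi/3}. As k → 1 (with k ≠ 1, k near 1 so that P(k) is invertible), the function (k - 1) · P(k)⁻¹ converges to the matrix (i/(6√3)) · R, where R is the 3×3 matrix with rows (-2, -√3, 3), (2, √3, -3), (0, 0, 0). In other words, P(k)⁻¹ has a simple pole at k = 1 with residue (i/(6√3)) R. -/

import Mathlib

open Complex

/-- The primitive cube root of unity `ω = e^{2πi/3}`. -/
noncomputable def ω : ℂ := Complex.exp (2 * Real.pi * Complex.I / 3)

/-- `l_j(k) = (1/√3)(ω^j k + 1/(ω^j k))`. -/
noncomputable def lfun (j : ℕ) (k : ℂ) : ℂ :=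
  (1 / (Real.sqrt 3 : ℂ)) * (ω ^ j * k + 1 / (ω ^ j * k))

/-- `λ(k) = (1/(3√3))(k³ + 1/k³)`. -/
noncomputable def lamfun (k : ℂ) : ℂ :=
  (1 / (3 * (Real.sqrt 3 : ℂ))) * (k ^ 3 + 1 / k ^ 3)

/-- `z_j(k) = √3 ((ω^j k)² + (ω^j k)⁻²)/(k³ + k⁻³)`. -/
noncomputable def zfun (j : ℕ) (k : ℂ) : ℂ :=
  (Real.sqrt 3 : ℂ) * ((ω ^ j * k) ^ 2 + ((ω ^ j * k) ^ 2)⁻¹) / (k ^ 3 + (k ^ 3)⁻¹)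

/-- The matrix `P(k)` with rows `(1,1,1)`, `(l₁,l₂,l₃)`, `(l₁²,l₂²,l₃²)`. -/
noncomputable def Pmat (k : ℂ) : Matrix (Fin 3) (Fin 3) ℂ :=
  !![1, 1, 1;
     lfun 1 k, lfun 2 k, lfun 3 k;
     (lfun 1 k) ^ 2, (lfun 2 k) ^ 2, (lfun 3 k) ^ 2]

/-! ### Auxiliary lemmas -/

lemma sqrt3_sq : ((Real.sqrt 3 : ℝ) : ℂ)^2 = 3 := by
  norm_cast
  rw [Real.sq_sqrt] <;> norm_num

lemma sqrt3_ne : ((Real.sqrt 3 : ℝ) : ℂ) ≠ 0 := by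
  norm_cast
  positivity

lemma sqrt3_pow3 : ((Real.sqrt 3 : ℝ) : ℂ)^3 = 3 * ((Real.sqrt 3 : ℝ) : ℂ) := by
  rw [pow_succ, sqrt3_sq]

lemma sqrt3_pow4 : ((Real.sqrt 3 : ℝ) : ℂ)^4 = 9 := by
  rw [show (4:ℕ) = 2*2 by rfl, pow_mul, sqrt3_sq]; norm_num

lemma I_pow3 : Complex.I^3 = -Complex.I := by
  rw [pow_succ, Complex.I_sq]; ring

lemma I_pow4 : Complex.I^4 = 1 := by
  rw [show (4:ℕ) = 2*2 by rfl, pow_mul, Complex.I_sq]; norm_num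

lemma omega_val : ω = (-1 + (Real.sqrt 3 : ℂ) * Complex.I) / 2 := by
  have h : (2 * Real.pi * Complex.I / 3) = ((2 * Real.pi / 3 : ℝ) : ℂ) * Complex.I := by
    push_cast; ring
  rw [ω, h, Complex.exp_mul_I, ← Complex.ofReal_cos, ← Complex.ofReal_sin,
    show (2 * Real.pi / 3 : ℝ) = Real.pi - Real.pi / 3 by ring,
    Real.cos_pi_sub, Real.sin_pi_sub, Real.cos_pi_div_three, Real.sin_pi_div_three]
  push_cast; ring

lemma omega_sq : ω^2 = (-1 - (Real.sqrt 3 : ℂ) * Complex.I) / 2 := by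
  rw [omega_val]
  linear_combination (-(1:ℂ)/4) * sqrt3_sq + (((Real.sqrt 3:ℝ):ℂ)^2/4) * Complex.I_sq

lemma omega_cube : ω^3 = 1 := by
  rw [show (3:ℕ) = 2 + 1 by rfl, pow_succ, omega_sq, omega_val]
  linear_combination ((1:ℂ)/4) * sqrt3_sq - (((Real.sqrt 3:ℝ):ℂ)^2/4) * Complex.I_sq

lemma omega_ne : ω ≠ 0 := Complex.exp_ne_zero _

lemma omega1_ne : (-1 + (Real.sqrt 3 : ℂ) * Complex.I) / 2 ≠ 0 := omega_val ▸ omega_ne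

lemma omega2_ne : (-1 - (Real.sqrt 3 : ℂ) * Complex.I) / 2 ≠ 0 :=
  omega_sq ▸ pow_ne_zero 2 omega_ne

lemma vand (a b c : ℂ) :
    !![1,1,1; a,b,c; a^2,b^2,c^2] *
    !![(b-c)*(b*c), -((b-c)*(b+c)), b-c;
       (c-a)*(c*a), -((c-a)*(c+a)), c-a;
       (a-b)*(a*b), -((a-b)*(a+b)), a-b]
    = ((a-b)*((b-c)*(a-c))) • (1 : Matrix (Fin 3) (Fin 3) ℂ) := by
  ext i j
  fin_cases i <;> fin_cases j <;>
    simp [Matrix.mul_apply, Fin.sum_univ_three, Matrix.one_apply] <;> ring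

/-- The "reduced adjugate" matrix. -/
noncomputable def Nmat (k : ℂ) : Matrix (Fin 3) (Fin 3) ℂ :=
  !![(lfun 2 k - lfun 3 k)*(lfun 2 k * lfun 3 k),
       -((lfun 2 k - lfun 3 k)*(lfun 2 k + lfun 3 k)), lfun 2 k - lfun 3 k;
     (lfun 3 k - lfun 1 k)*(lfun 3 k * lfun 1 k),
       -((lfun 3 k - lfun 1 k)*(lfun 3 k + lfun 1 k)), lfun 3 k - lfun 1 k;
     (lfun 1 k - lfun 2 k)*(lfun 1 k * lfun 2 k),
       -((lfun 1 k - lfun 2 k)*(lfun 1 k + lfun 2 k)), lfun 1 k - lfun 2 k]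

lemma Pmat_mul_Nmat (k : ℂ) :
    Pmat k * Nmat k
      = ((lfun 1 k - lfun 2 k) * ((lfun 2 k - lfun 3 k) * (lfun 1 k - lfun 3 k)))
        • (1 : Matrix (Fin 3) (Fin 3) ℂ) :=
  vand (lfun 1 k) (lfun 2 k) (lfun 3 k)

/-- the candidate limit function. -/
noncomputable def Bfun (k : ℂ) : Matrix (Fin 3) (Fin 3) ℂ :=
  (-Complex.I * k / ((k+1) * ((lfun 2 k - lfun 3 k) * (lfun 1 k - lfun 3 k)))) • Nmat k

lemma omega_inv : ω⁻¹ = ω^2 :=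
  inv_eq_of_mul_eq_one_right (by rw [← pow_succ']; exact omega_cube)

lemma omega_sq_inv : (ω^2)⁻¹ = ω :=
  inv_eq_of_mul_eq_one_right (by rw [← pow_succ]; exact omega_cube)

lemma lfun_sub {k : ℂ} (hk : k ≠ 0) :
    lfun 1 k - lfun 2 k = Complex.I * (k^2 - 1) / k := by
  simp only [lfun, pow_one, one_div, mul_inv, omega_inv, omega_sq_inv]
  rw [omega_sq, omega_val]
  field_simp
  ring

lemma lfun_one_1 : lfun 1 1 = -(1/(Real.sqrt 3 : ℂ)) := by
  simp only [lfun, pow_one, mul_one, one_div, omega_inv]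
  rw [omega_sq, omega_val]
  field_simp
  ring

lemma lfun_one_2 : lfun 2 1 = -(1/(Real.sqrt 3 : ℂ)) := by
  simp only [lfun, mul_one, one_div, omega_sq_inv]
  rw [omega_sq, omega_val]
  field_simp
  ring

lemma lfun_one_3 : lfun 3 1 = 2/(Real.sqrt 3 : ℂ) := by
  simp only [lfun, mul_one, one_div, omega_cube, inv_one]
  rw [inv_mul_eq_div, div_eq_div_iff sqrt3_ne sqrt3_ne]
  ring

lemma g_one : (lfun 2 1 - lfun 3 1) * (lfun 1 1 - lfun 3 1) = 3 := by
  rw [lfun_one_1, lfun_one_2, lfun_one_3]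
  field_simp
  linear_combination (-3 : ℂ) * sqrt3_sq

lemma lfun_contAt (j : ℕ) {k : ℂ} (hk : ω^j * k ≠ 0) : ContinuousAt (lfun j) k := by
  unfold lfun
  apply ContinuousAt.mul continuousAt_const
  apply ContinuousAt.add
  · exact continuousAt_const.mul continuousAt_id
  · exact continuousAt_const.div (continuousAt_const.mul continuousAt_id) hk

open Filter Topology in
/-- `P(k)⁻¹` has a simple pole at `k = 1` with residue `(i/(6√3)) R`,
where `R` has rows `(-2,-√3,3)`, `(2,√3,-3)`, `(0,0,0)`. -/
theorem Pmat_inv_residue_at_one :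
    Tendsto (fun k : ℂ => (k - 1) • (Pmat k)⁻¹) (𝓝[≠] (1 : ℂ))
      (𝓝 ((Complex.I / (6 * (Real.sqrt 3 : ℂ))) •
        !![-2, -(Real.sqrt 3 : ℂ), 3;
           2, (Real.sqrt 3 : ℂ), -3;
           0, 0, 0])) := by
  have hl : ∀ j, ContinuousAt (lfun j) 1 :=
    fun j => lfun_contAt j (by simp [pow_ne_zero, omega_ne])
  have hgc : ContinuousAt (fun k => (lfun 2 k - lfun 3 k) * (lfun 1 k - lfun 3 k)) 1 :=
    ((hl 2).sub (hl 3)).mul ((hl 1).sub (hl 3))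
  have h1 : ContinuousAt (lfun 1) 1 := hl 1
  have h2 : ContinuousAt (lfun 2) 1 := hl 2
  have h3 : ContinuousAt (lfun 3) 1 := hl 3
  -- continuity of Bfun at 1
  have hBc : ContinuousAt Bfun 1 := by
    apply ContinuousAt.fun_smul
    · apply ContinuousAt.div
      · exact continuousAt_const.mul continuousAt_id
      · exact (continuousAt_id.add continuousAt_const).mul hgc
      · simp only [g_one]
        norm_num
    · unfold Nmat
      refine continuousAt_pi.2 ?_
      intro i
      rw [continuousAt_pi]
      intro j
      fin_cases i <;> fin_cases j <;> simp <;> fun_prop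
  have hBt : Tendsto Bfun (𝓝[≠] 1) (𝓝 (Bfun 1)) :=
    hBc.tendsto.mono_left nhdsWithin_le_nhds
  -- eventual equality
  have hev : ∀ᶠ k in 𝓝[≠] (1:ℂ), (k - 1) • (Pmat k)⁻¹ = Bfun k := by
    have h0 : ∀ᶠ k in 𝓝[≠] (1:ℂ), k ≠ 0 :=
      eventually_nhdsWithin_of_eventually_nhds (eventually_ne_nhds (by norm_num))
    have hm1 : ∀ᶠ k in 𝓝[≠] (1:ℂ), k ≠ -1 :=
      eventually_nhdsWithin_of_eventually_nhds (eventually_ne_nhds (by norm_num))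
    have hgne : ∀ᶠ k in 𝓝[≠] (1:ℂ),
        (lfun 2 k - lfun 3 k) * (lfun 1 k - lfun 3 k) ≠ 0 :=
      eventually_nhdsWithin_of_eventually_nhds (hgc.eventually_ne (by rw [g_one]; norm_num))
    filter_upwards [h0, hm1, hgne, self_mem_nhdsWithin] with k hk0 hkm1 hgk hk1'
    have hk1 : k ≠ 1 := hk1'
    have hab := lfun_sub hk0
    have hsq : k^2 - 1 ≠ 0 := by
      intro h
      have : (k - 1) * (k + 1) = 0 := by linear_combination h
      rcases mul_eq_zero.1 this with h' | h'
      · exact hk1 (by linear_combination h')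
      · exact hkm1 (by linear_combination h')
    have habne : lfun 1 k - lfun 2 k ≠ 0 := by
      rw [hab]
      exact div_ne_zero (mul_ne_zero Complex.I_ne_zero hsq) hk0
    have hD : (lfun 1 k - lfun 2 k) * ((lfun 2 k - lfun 3 k) * (lfun 1 k - lfun 3 k)) ≠ 0 :=
      mul_ne_zero habne hgk
    have hinv : (Pmat k)⁻¹
        = ((lfun 1 k - lfun 2 k) * ((lfun 2 k - lfun 3 k) * (lfun 1 k - lfun 3 k)))⁻¹ • Nmat k := by
      apply Matrix.inv_eq_right_inv
      rw [Matrix.mul_smul, Pmat_mul_Nmat, smul_smul, inv_mul_cancel₀ hD, one_smul]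
    rw [hinv, smul_smul, Bfun]
    congr 1
    rw [hab]
    have hk1' : k + 1 ≠ 0 := fun h => hkm1 (by linear_combination h)
    field_simp
    ring_nf
    simp only [Complex.I_sq, I_pow3, I_pow4]
    ring
  -- value of Bfun at 1
  have eN : Nmat 1 = !![2/(Real.sqrt 3:ℂ), 1, -(Real.sqrt 3:ℂ);
      -2/(Real.sqrt 3:ℂ), -1, (Real.sqrt 3:ℂ); 0, 0, 0] := by
    rw [Nmat, lfun_one_1, lfun_one_2, lfun_one_3]
    ext i j
    fin_cases i <;> fin_cases j <;> simp <;>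
      (try field_simp) <;> ring_nf <;>
      simp only [sqrt3_sq, sqrt3_pow3, sqrt3_pow4, Complex.I_sq, I_pow3, I_pow4] <;>
      try ring
  have hB1 : Bfun 1 = (Complex.I / (6 * (Real.sqrt 3 : ℂ))) •
        !![-2, -(Real.sqrt 3 : ℂ), 3;
           2, (Real.sqrt 3 : ℂ), -3;
           0, 0, 0] := by
    have e : Bfun 1 = (-Complex.I/6) • Nmat 1 := by
      rw [Bfun, g_one]
      norm_num
    rw [e, eN]
    ext i j
    fin_cases i <;> fin_cases j <;> simp <;>
      (try field_simp) <;> ring_nf <;>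
      simp only [sqrt3_sq, sqrt3_pow3, sqrt3_pow4, Complex.I_sq, I_pow3, I_pow4] <;>
      try ring
  rw [← hB1]
  exact Tendsto.congr' (hev.mono fun k h => h.symm) hBt
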